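/- With the sets of the previous statement and T = (1/3)(P_1 + P_2 + P_3), one has Fix T = {(ξ_1,ξ_2) ∈ C_3 : ξ_2 = (α+β)/2} and Fix(P_3∘P_2∘P_1) = {(ξ_1,ξ_2) ∈ C_3 : ξ_2 = β}. In particular, if β < 0 < α+β and η = 1 + β/α, then η ∈ (0,1), Fix R^ε ≠ ∅ for ε < η, and Fix R^ε = ∅ for ε ≥ η. -/

import Mathlib

/-! The projections onto the lines `ξ₂ = α`, `ξ₂ = β` only move the second coordinate, while the
projection onto the convex region `C₃` never moves a point purely vertically: the normal cone of
`C₃` at a boundary point `(ξ₁, ξ₂)` is spanned by `-(ξ₂, ξ₁)`, whose first coordinate is nonzero.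
Hence in each fixed point equation the first coordinate forces the `C₃`-step to be trivial, and the
second coordinate becomes a linear equation; for the relaxed composition it is
`(2 - ε) ξ₂ = (1 - ε) α + β` (with `ε = 1` for `P₃ ∘ P₂ ∘ P₁`), which has a solution in `C₃`
iff its right-hand side is positive, i.e. iff `ε < 1 + β / α`. -/

local notation "E2" => EuclideanSpace ℝ (Fin 2)

def IsNearestPoint {E : Type*} [NormedAddCommGroup E] (K : Set E) (x u : E) : Prop :=
  u ∈ K ∧ ∀ y ∈ K, ‖x - u‖ ≤ ‖x - y‖

namespace IsNearestPoint

variable {E : Type*} [NormedAddCommGroup E] {K : Set E} {x u : E}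

theorem eq_of_mem (h : IsNearestPoint K x u) (hx : x ∈ K) : u = x := by
  simpa [sub_eq_zero, eq_comm] using h.2 x hx

theorem inner_sub_nonpos [InnerProductSpace ℝ E] (h : IsNearestPoint K x u) (hK : Convex ℝ K)
    {w : E} (hw : w ∈ K) : inner ℝ (x - u) (w - u) ≤ 0 := by
  have : Nonempty K := ⟨⟨u, h.1⟩⟩
  refine (norm_eq_iInf_iff_real_inner_le_zero hK h.1).1 ?_ w hw
  exact le_antisymm (le_ciInf fun y => h.2 y y.2)
    (ciInf_le ⟨0, Set.forall_mem_range.2 fun _ => norm_nonneg _⟩ (⟨u, h.1⟩ : K))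

end IsNearestPoint

def horizontalLine (c : ℝ) : Set E2 := {p | p 1 = c}

def hyperbolicRegion (γ : ℝ) : Set E2 := {p | 0 < p 0 ∧ 0 < p 1 ∧ γ ≤ p 0 * p 1}

theorem euclideanSpace_fin_two_eta (p : E2) : !₂[p 0, p 1] = p := by
  ext i; fin_cases i <;> rfl

theorem IsNearestPoint.eq_of_horizontalLine {c : ℝ} {x u : E2}
    (h : IsNearestPoint (horizontalLine c) x u) : u = !₂[x 0, c] := by
  have hu : u 1 = c := h.1
  have hmin : (x 0 - u 0) ^ 2 + (x 1 - c) ^ 2 ≤ (x 1 - c) ^ 2 := by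
    simpa [EuclideanSpace.norm_sq_eq, Fin.sum_univ_two, hu] using
      pow_le_pow_left₀ (norm_nonneg _) (h.2 !₂[x 0, c] (by simp [horizontalLine])) 2
  have hu0 : u 0 = x 0 := by nlinarith [sq_nonneg (x 0 - u 0)]
  rw [← euclideanSpace_fin_two_eta u, hu0, hu]

theorem convex_hyperbolicRegion (γ : ℝ) : Convex ℝ (hyperbolicRegion γ) := by
  rintro p ⟨hp0, hp1, hpγ⟩ q ⟨hq0, hq1, hqγ⟩ a b ha hb hab
  simp only [hyperbolicRegion, Set.mem_ofPred_eq, PiLp.add_apply, PiLp.smul_apply, smul_eq_mul]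
  -- AM-GM: `(p₀q₁ + q₀p₁)² ≥ 4 (p₀p₁)(q₀q₁) ≥ 4γ²`
  have hcross : 2 * γ ≤ p 0 * q 1 + q 0 * p 1 := by
    rcases le_or_gt γ 0 with hγ | hγ
    · nlinarith [mul_pos hp0 hq1, mul_pos hq0 hp1]
    · nlinarith [sq_nonneg (p 0 * q 1 - q 0 * p 1), mul_pos hp0 hq1, mul_pos hq0 hp1,
        mul_le_mul hpγ hqγ hγ.le (mul_pos hp0 hp1).le]
  refine ⟨convex_Ioi (0 : ℝ) hp0 hq0 ha hb hab, convex_Ioi (0 : ℝ) hp1 hq1 ha hb hab, ?_⟩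
  calc γ = (a + b) ^ 2 * γ := by rw [hab]; ring
    _ ≤ a ^ 2 * (p 0 * p 1) + b ^ 2 * (q 0 * q 1) + a * b * (p 0 * q 1 + q 0 * p 1) := by
      nlinarith [mul_le_mul_of_nonneg_left hpγ (sq_nonneg a),
        mul_le_mul_of_nonneg_left hqγ (sq_nonneg b),
        mul_le_mul_of_nonneg_left hcross (mul_nonneg ha hb)]
    _ = _ := by ring

theorem IsNearestPoint.eq_of_hyperbolicRegion {γ : ℝ} {x u : E2}
    (h : IsNearestPoint (hyperbolicRegion γ) x u) (h0 : u 0 = x 0) : u = x := by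
  obtain ⟨hu0, hu1, huγ⟩ : u ∈ hyperbolicRegion γ := h.1
  have hinner : ∀ w : E2, w ∈ hyperbolicRegion γ → (x 1 - u 1) * (w 1 - u 1) ≤ 0 := by
    intro w hw
    simpa [PiLp.inner_apply, Fin.sum_univ_two, h0, mul_comm] using
      h.inner_sub_nonpos (convex_hyperbolicRegion γ) hw
  -- `x - u` is vertical, and the region contains points above and below `u`.
  have hup := hinner !₂[u 0, 2 * u 1] ⟨by simpa, by simpa, by simp; nlinarith [mul_pos hu0 hu1]⟩
  have hdown := hinner !₂[2 * u 0, u 1 / 2] ⟨by simpa, by simpa, by simp; linarith⟩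
  simp only [Matrix.cons_val_one, Matrix.cons_val_fin_one] at hup hdown
  have h1 : u 1 = x 1 := by nlinarith
  rw [← euclideanSpace_fin_two_eta u, ← euclideanSpace_fin_two_eta x, h0, h1]

section Relax

variable {E : Type*} [AddCommGroup E] [Module ℝ E]

def relax (ε : ℝ) (P : E → E) (q : E) : E :=
  q + ε • (P q - q)

theorem relax_one (P : E → E) : relax 1 P = P := by
  funext q; simp [relax]

theorem relax_eq_self {ε : ℝ} {P : E → E} {q : E} (h : P q = q) : relax ε P q = q := by
  simp [relax, h]

end Relax

theorem relax_of_eq_horizontal {c ε : ℝ} {P : E2 → E2} (hP : ∀ x, P x = !₂[x 0, c]) (p : E2) :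
    relax ε P p = !₂[p 0, (1 - ε) * p 1 + ε * c] := by
  rw [relax, hP]
  ext i; fin_cases i <;> simp; ring

theorem setOf_average_fixed_eq {α β γ : ℝ} {P1 P2 P3 : E2 → E2} (hP1 : ∀ x, P1 x = !₂[x 0, α])
    (hP2 : ∀ x, P2 x = !₂[x 0, β]) (hP3 : ∀ x, IsNearestPoint (hyperbolicRegion γ) x (P3 x)) :
    {p | (3 : ℝ)⁻¹ • (P1 p + P2 p + P3 p) = p} = {p ∈ hyperbolicRegion γ | p 1 = (α + β) / 2} := by
  ext p
  constructor
  · intro h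
    have h0 := congrArg (· 0) h
    have h1 := congrArg (· 1) h
    simp only [hP1, hP2, PiLp.smul_apply, PiLp.add_apply, smul_eq_mul] at h0 h1
    norm_num at h0 h1
    have hfix : P3 p = p := (hP3 p).eq_of_hyperbolicRegion (by linarith)
    rw [hfix] at h1
    exact ⟨hfix ▸ (hP3 p).1, by linarith⟩
  · rintro ⟨hp, hp1⟩
    rw [Set.mem_ofPred_eq, (hP3 p).eq_of_mem hp, hP1, hP2]
    ext i; fin_cases i <;> simp <;> linarith

theorem setOf_relax_comp_fixed_eq {α β γ ε : ℝ} {P1 P2 P3 : E2 → E2}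
    (hP1 : ∀ x, P1 x = !₂[x 0, α]) (hP2 : ∀ x, P2 x = !₂[x 0, β])
    (hP3 : ∀ x, IsNearestPoint (hyperbolicRegion γ) x (P3 x)) (hε0 : ε ≠ 0) (hε2 : ε ≠ 2) :
    {p | relax ε P3 (relax ε P2 (relax ε P1 p)) = p} =
      {p ∈ hyperbolicRegion γ | p 1 = ((1 - ε) * α + β) / (2 - ε)} := by
  ext p
  simp only [Set.mem_ofPred_eq]
  set q := relax ε P2 (relax ε P1 p)
  have hq : q = !₂[p 0, (1 - ε) * ((1 - ε) * p 1 + ε * α) + ε * β] := by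
    simp [q, relax_of_eq_horizontal hP1, relax_of_eq_horizontal hP2]
  have hq_eq_iff : q = p ↔ p 1 = ((1 - ε) * α + β) / (2 - ε) := by
    rw [eq_div_iff (sub_ne_zero.2 (Ne.symm hε2))]
    constructor
    · intro h
      have h1 := congrArg (· 1) h
      simp only [hq, PiLp.toLp_apply, Matrix.cons_val_one, Matrix.cons_val_fin_one] at h1
      apply mul_left_cancel₀ hε0
      linear_combination -h1
    · intro h
      rw [hq]
      ext i; fin_cases i <;> simp
      linear_combination -ε * h
  constructor
  · intro h
    have hfix : P3 q = q := by
      refine (hP3 q).eq_of_hyperbolicRegion (mul_left_cancel₀ hε0 ?_)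
      have h0 : q 0 + ε * (P3 q 0 - q 0) = p 0 := congrArg (· 0) h
      have hq0 : q 0 = p 0 := by simp [hq]
      linear_combination h0 - hq0
    rw [relax_eq_self hfix] at h
    exact ⟨h ▸ hfix ▸ (hP3 q).1, hq_eq_iff.1 h⟩
  · rintro ⟨hp, hp1⟩
    rw [hq_eq_iff.2 hp1, relax_eq_self ((hP3 p).eq_of_mem hp)]

theorem sep_hyperbolicRegion_nonempty_iff {γ m : ℝ} (hγ : 0 < γ) :
    {p ∈ hyperbolicRegion γ | p 1 = m}.Nonempty ↔ 0 < m := by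
  constructor
  · rintro ⟨p, ⟨-, hp1, -⟩, rfl⟩
    exact hp1
  · intro hm
    refine ⟨!₂[γ / m, m], ⟨?_, ?_, ?_⟩, ?_⟩ <;> simp
    · positivity
    · exact hm
    · rw [div_mul_cancel₀ γ hm.ne']

theorem stmt12 (α β γ : ℝ) (hγ : 0 < γ)
    (C1 C2 C3 : Set (EuclideanSpace ℝ (Fin 2)))
    (hC1 : C1 = {p | p 1 = α}) (hC2 : C2 = {p | p 1 = β})
    (hC3 : C3 = {p | 0 < p 0 ∧ 0 < p 1 ∧ γ ≤ p 0 * p 1})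
    (P1 P2 P3 : EuclideanSpace ℝ (Fin 2) → EuclideanSpace ℝ (Fin 2))
    (hP1 : ∀ x, P1 x ∈ C1 ∧ ∀ y ∈ C1, ‖x - P1 x‖ ≤ ‖x - y‖)
    (hP2 : ∀ x, P2 x ∈ C2 ∧ ∀ y ∈ C2, ‖x - P2 x‖ ≤ ‖x - y‖)
    (hP3 : ∀ x, P3 x ∈ C3 ∧ ∀ y ∈ C3, ‖x - P3 x‖ ≤ ‖x - y‖) :
    {p | (3:ℝ)⁻¹ • (P1 p + P2 p + P3 p) = p} = {p ∈ C3 | p 1 = (α + β) / 2} ∧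
    {p | P3 (P2 (P1 p)) = p} = {p ∈ C3 | p 1 = β} ∧
    (β < 0 → 0 < α + β →
      (1 + β / α) ∈ Set.Ioo (0:ℝ) 1 ∧
      ∀ ε ∈ Set.Ioo (0:ℝ) 1,
        (ε < 1 + β / α →
          {p | (fun q => q + ε • (P3 q - q))
            ((fun q => q + ε • (P2 q - q))
              ((fun q => q + ε • (P1 q - q)) p)) = p}.Nonempty) ∧
        (1 + β / α ≤ ε →
          {p | (fun q => q + ε • (P3 q - q))
            ((fun q => q + ε • (P2 q - q))
              ((fun q => q + ε • (P1 q - q)) p)) = p} = ∅)) := by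
  subst hC1 hC2 hC3
  have hL1 : ∀ x, P1 x = !₂[x 0, α] := fun x => IsNearestPoint.eq_of_horizontalLine (hP1 x)
  have hL2 : ∀ x, P2 x = !₂[x 0, β] := fun x => IsNearestPoint.eq_of_horizontalLine (hP2 x)
  have hfix {ε : ℝ} := setOf_relax_comp_fixed_eq (ε := ε) hL1 hL2 hP3
  refine ⟨setOf_average_fixed_eq hL1 hL2 hP3, ?_, fun hβ hαβ => ?_⟩
  · have h := hfix (ε := 1) one_ne_zero (by norm_num)
    norm_num [relax_one] at h
    exact h
  have hα : 0 < α := by linarith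
  have hη : 1 + β / α = (α + β) / α := by field_simp
  refine ⟨⟨hη ▸ div_pos hαβ hα, by linarith [div_neg_of_neg_of_pos hβ hα]⟩, ?_⟩
  rintro ε ⟨hε0, hε1⟩
  have hnonempty : {p | relax ε P3 (relax ε P2 (relax ε P1 p)) = p}.Nonempty ↔ ε < 1 + β / α := by
    have hnum : (1 - ε) * α + β = (1 + β / α - ε) * α := by field_simp; ring
    rw [hfix hε0.ne' (by linarith), sep_hyperbolicRegion_nonempty_iff hγ,
      div_pos_iff_of_pos_right (by linarith), hnum, mul_pos_iff_of_pos_right hα, sub_pos]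
  exact ⟨hnonempty.2, fun h => Set.not_nonempty_iff_eq_empty.1 (mt hnonempty.1 (not_lt.2 h))⟩
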